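/- Let A = (a_{ijklpq}) ∈ T_{6,3} be paired symmetric. Suppose λ* is an M-eigenvalue of A whose absolute value is largest among all M-eigenvalues of A (i.e., |λ| ≤ |λ*| for every M-eigenvalue λ of A), and let x*, y*, z* ∈ ℝ³ be eigenvectors of A associated with λ*. Then λ*·(x*)²(y*)²(z*)² is a best rank-one approximation of A: for every λ ∈ ℝ and every x, y, z ∈ ℝ³ with x·x = 1, y·y = 1, z·z = 1, one has ‖A − λ*·(x*)²(y*)²(z*)²‖_HS ≤ ‖A − λ·x²y²z²‖_HS. -/

import Mathlib

/-!
For unit `x, y, z` the square expands as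
`‖A - λ·x²y²z²‖² = ‖A‖² - 2 λ f(x,y,z) + λ²` with `f = hexForm A`, which is at least
`‖A‖² - f(x,y,z)²`, with equality at `λ = f(x,y,z)`. An M-eigentriple satisfies `f(x*,y*,z*) = λ*`,
so it suffices to show `|f| ≤ |λ*|` on the product of unit spheres. Take a maximiser `(u,v,w)` of
`|f|` there. With `v, w` fixed, `f(·,v,w)` is the quadratic form of a symmetric matrix `M`, and a
unit vector maximising the absolute value of a quadratic form is an eigenvector: if the maximum is
`μ ≥ 0`, then `μ•1 - M` is positive semidefinite and its form vanishes at `u` (for `μ < 0` use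
`-M`). Doing this in each slot shows that `(u,v,w)` is an M-eigentriple with eigenvalue
`f(u,v,w)`, whence `|f| ≤ |f(u,v,w)| ≤ |λ*|`.
-/

open scoped BigOperators

/-- A sixth order three dimensional tensor. -/
abbrev Tensor6 := Fin 3 → Fin 3 → Fin 3 → Fin 3 → Fin 3 → Fin 3 → ℝ

/-- The homogeneous polynomial `A x²y²z²`. -/
def hexForm (A : Tensor6) (x y z : Fin 3 → ℝ) : ℝ :=
  ∑ i, ∑ j, ∑ k, ∑ l, ∑ p, ∑ q,
    A i j k l p q * x i * x j * y k * y l * z p * z q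

/-- `A` is paired symmetric. -/
def PairedSym6 (A : Tensor6) : Prop :=
  ∀ i j k l p q : Fin 3,
    A i j k l p q = A j i k l p q ∧
    A i j k l p q = A i j l k p q ∧
    A i j k l p q = A i j k l q p

/-- `lam` is an M-eigenvalue of `A` with eigenvectors `x, y, z`. -/
def MEig6 (A : Tensor6) (lam : ℝ) (x y z : Fin 3 → ℝ) : Prop :=
  (∑ i, x i * x i) = 1 ∧ (∑ i, y i * y i) = 1 ∧ (∑ i, z i * z i) = 1 ∧
  (∀ i, (∑ j, ∑ k, ∑ l, ∑ p, ∑ q,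
      A i j k l p q * x j * y k * y l * z p * z q) = lam * x i) ∧
  (∀ k, (∑ i, ∑ j, ∑ l, ∑ p, ∑ q,
      A i j k l p q * x i * x j * y l * z p * z q) = lam * y k) ∧
  (∀ p, (∑ i, ∑ j, ∑ k, ∑ l, ∑ q,
      A i j k l p q * x i * x j * y k * y l * z q) = lam * z p)

/-- The Hilbert–Schmidt norm of a sixth order tensor. -/
noncomputable def hsNorm6 (T : Tensor6) : ℝ :=
  Real.sqrt (∑ i, ∑ j, ∑ k, ∑ l, ∑ p, ∑ q, (T i j k l p q) ^ 2)

/-- The rank-one tensor `lam · x²y²z²`. -/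
def rankOne6 (lam : ℝ) (x y z : Fin 3 → ℝ) : Tensor6 :=
  fun i j k l p q => lam * (x i * x j * y k * y l * z p * z q)


open Matrix

section QuadraticForm

variable {ι : Type*} [Fintype ι]

theorem Matrix.IsSymm.mulVec_eq_smul_of_dotProduct_mulVec_le {M : Matrix ι ι ℝ} (hM : M.IsSymm)
    {μ : ℝ} {u : ι → ℝ} (hle : ∀ x, x ⬝ᵥ M *ᵥ x ≤ μ * (x ⬝ᵥ x))
    (heq : u ⬝ᵥ M *ᵥ u = μ * (u ⬝ᵥ u)) : M *ᵥ u = μ • u := by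
  classical
  have hpsd : (μ • (1 : Matrix ι ι ℝ) - M).PosSemidef := by
    refine .of_dotProduct_mulVec_nonneg ?_ fun x => ?_
    · simp only [IsHermitian, conjTranspose_eq_transpose_of_trivial, transpose_sub,
        transpose_smul, transpose_one, hM.eq]
    · simpa [sub_mulVec, dotProduct_sub, smul_mulVec, dotProduct_smul] using
        sub_nonneg.mpr (hle x)
  have hzero := (hpsd.dotProduct_mulVec_zero_iff u).mp (by
    simp [sub_mulVec, dotProduct_sub, smul_mulVec, dotProduct_smul, heq])
  simpa [sub_mulVec, smul_mulVec, sub_eq_zero, eq_comm] using hzero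

theorem abs_dotProduct_mulVec_le_of_forall_unit {M : Matrix ι ι ℝ} {m : ℝ}
    (h : ∀ x, x ⬝ᵥ x = 1 → |x ⬝ᵥ M *ᵥ x| ≤ m) (x : ι → ℝ) :
    |x ⬝ᵥ M *ᵥ x| ≤ m * (x ⬝ᵥ x) := by
  have hnonneg : 0 ≤ x ⬝ᵥ x := Finset.sum_nonneg fun i _ => mul_self_nonneg (x i)
  rcases hnonneg.eq_or_lt with h0 | hpos
  · simp [dotProduct_self_eq_zero.mp h0.symm]
  set c := (√(x ⬝ᵥ x))⁻¹
  have hc : c ^ 2 * (x ⬝ᵥ x) = 1 := by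
    rw [inv_pow, Real.sq_sqrt hpos.le, inv_mul_cancel₀ hpos.ne']
  have := h (c • x) (by simpa [dotProduct_smul, smul_dotProduct, ← mul_assoc, sq] using hc)
  rw [mulVec_smul, dotProduct_smul, smul_dotProduct, smul_eq_mul, smul_eq_mul, ← mul_assoc,
    abs_mul, abs_of_nonneg (mul_self_nonneg c)] at this
  calc |x ⬝ᵥ M *ᵥ x| = c ^ 2 * (x ⬝ᵥ x) * |x ⬝ᵥ M *ᵥ x| := by rw [hc, one_mul]
    _ = (c * c * |x ⬝ᵥ M *ᵥ x|) * (x ⬝ᵥ x) := by ring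
    _ ≤ m * (x ⬝ᵥ x) := by gcongr

theorem Matrix.IsSymm.mulVec_eq_smul_of_abs_le {M : Matrix ι ι ℝ} (hM : M.IsSymm) {u : ι → ℝ}
    (hu : u ⬝ᵥ u = 1) (hmax : ∀ x, x ⬝ᵥ x = 1 → |x ⬝ᵥ M *ᵥ x| ≤ |u ⬝ᵥ M *ᵥ u|) :
    M *ᵥ u = (u ⬝ᵥ M *ᵥ u) • u := by
  have hle := abs_dotProduct_mulVec_le_of_forall_unit hmax
  rcases le_or_gt 0 (u ⬝ᵥ M *ᵥ u) with hμ | hμ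
  · refine hM.mulVec_eq_smul_of_dotProduct_mulVec_le (fun x => ?_) (by rw [hu, mul_one])
    simpa [abs_of_nonneg hμ] using (le_abs_self _).trans (hle x)
  · have := hM.neg.mulVec_eq_smul_of_dotProduct_mulVec_le (μ := -(u ⬝ᵥ M *ᵥ u)) (u := u)
      (fun x => ?_) (by simp [neg_mulVec, hu])
    · simpa [neg_mulVec] using this
    · have := hle x
      rw [abs_of_neg hμ] at this
      simp only [neg_mulVec, dotProduct_neg, neg_mul, neg_le_neg_iff]
      linarith [neg_abs_le (x ⬝ᵥ M *ᵥ x)]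

theorem isCompact_setOf_dotProduct_self_eq_one : IsCompact {x : ι → ℝ | x ⬝ᵥ x = 1} := by
  refine (isCompact_closedBall (0 : ι → ℝ) 1).of_isClosed_subset
    (isClosed_eq (by unfold dotProduct; fun_prop) continuous_const) fun x hx => ?_
  rw [mem_closedBall_zero_iff, pi_norm_le_iff_of_nonneg zero_le_one]
  intro i
  rw [Real.norm_eq_abs, abs_le_one_iff_mul_self_le_one]
  exact (Finset.single_le_sum (fun j _ => mul_self_nonneg (x j)) (Finset.mem_univ i)).trans_eq hx

end QuadraticForm

section Contraction

variable {A : Tensor6} {x y z : Fin 3 → ℝ}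

def contrYZ (A : Tensor6) (y z : Fin 3 → ℝ) : Matrix (Fin 3) (Fin 3) ℝ :=
  of fun i j => ∑ k, ∑ l, ∑ p, ∑ q, A i j k l p q * y k * y l * z p * z q

def contrXZ (A : Tensor6) (x z : Fin 3 → ℝ) : Matrix (Fin 3) (Fin 3) ℝ :=
  of fun k l => ∑ i, ∑ j, ∑ p, ∑ q, A i j k l p q * x i * x j * z p * z q

def contrXY (A : Tensor6) (x y : Fin 3 → ℝ) : Matrix (Fin 3) (Fin 3) ℝ :=
  of fun p q => ∑ i, ∑ j, ∑ k, ∑ l, A i j k l p q * x i * x j * y k * y l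

theorem contrYZ_isSymm (hA : PairedSym6 A) : (contrYZ A y z).IsSymm :=
  IsSymm.ext fun i j => by simp only [contrYZ, of_apply, (hA i j _ _ _ _).1]

theorem contrXZ_isSymm (hA : PairedSym6 A) : (contrXZ A x z).IsSymm :=
  IsSymm.ext fun k l => by simp only [contrXZ, of_apply, (hA _ _ k l _ _).2.1]

theorem contrXY_isSymm (hA : PairedSym6 A) : (contrXY A x y).IsSymm :=
  IsSymm.ext fun p q => by simp only [contrXY, of_apply, (hA _ _ _ _ p q).2.2]

theorem contrYZ_mulVec_apply (i : Fin 3) : (contrYZ A y z *ᵥ x) i =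
    ∑ j, ∑ k, ∑ l, ∑ p, ∑ q, A i j k l p q * x j * y k * y l * z p * z q := by
  simp only [mulVec, dotProduct, contrYZ, of_apply, Finset.sum_mul]
  simp only [mul_comm, mul_left_comm]

theorem contrXZ_mulVec_apply (k : Fin 3) : (contrXZ A x z *ᵥ y) k =
    ∑ i, ∑ j, ∑ l, ∑ p, ∑ q, A i j k l p q * x i * x j * y l * z p * z q := by
  simp only [mulVec, dotProduct, contrXZ, of_apply, Finset.sum_mul]
  rw [← Finset.sum_comm_cycle]
  simp only [mul_comm, mul_left_comm]

theorem contrXY_mulVec_apply (p : Fin 3) : (contrXY A x y *ᵥ z) p =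
    ∑ i, ∑ j, ∑ k, ∑ l, ∑ q, A i j k l p q * x i * x j * y k * y l * z q := by
  simp only [mulVec, dotProduct, contrXY, of_apply, Finset.sum_mul]
  rw [← Finset.sum_comm_cycle]
  refine Finset.sum_congr rfl fun i _ => Finset.sum_congr rfl fun j _ => ?_
  rw [← Finset.sum_comm_cycle]

theorem hexForm_eq_dotProduct_contrYZ : hexForm A x y z = x ⬝ᵥ contrYZ A y z *ᵥ x := by
  simp only [hexForm, dotProduct, contrYZ_mulVec_apply, Finset.mul_sum]
  simp only [mul_comm, mul_left_comm]

theorem hexForm_eq_dotProduct_contrXZ : hexForm A x y z = y ⬝ᵥ contrXZ A x z *ᵥ y := by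
  simp only [hexForm, dotProduct, contrXZ_mulVec_apply, Finset.mul_sum]
  rw [Finset.sum_comm_cycle]
  simp only [mul_comm, mul_left_comm]

theorem hexForm_eq_dotProduct_contrXY : hexForm A x y z = z ⬝ᵥ contrXY A x y *ᵥ z := by
  simp only [hexForm, dotProduct, contrXY_mulVec_apply, Finset.mul_sum]
  symm
  rw [← Finset.sum_comm_cycle]
  refine Finset.sum_congr rfl fun i _ => Finset.sum_congr rfl fun j _ => ?_
  rw [← Finset.sum_comm_cycle]
  simp only [mul_comm, mul_left_comm]

end Contraction

section Eigen

variable {A : Tensor6} {lam : ℝ} {u v w x y z : Fin 3 → ℝ}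

theorem mEig6_iff : MEig6 A lam x y z ↔ x ⬝ᵥ x = 1 ∧ y ⬝ᵥ y = 1 ∧ z ⬝ᵥ z = 1 ∧
    contrYZ A y z *ᵥ x = lam • x ∧ contrXZ A x z *ᵥ y = lam • y ∧
    contrXY A x y *ᵥ z = lam • z := by
  simp only [MEig6, funext_iff, contrYZ_mulVec_apply, contrXZ_mulVec_apply,
    contrXY_mulVec_apply, Pi.smul_apply, smul_eq_mul]
  rfl

theorem MEig6.hexForm_eq (h : MEig6 A lam x y z) : hexForm A x y z = lam := by
  obtain ⟨hx, -, -, hYZ, -⟩ := mEig6_iff.mp h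
  rw [hexForm_eq_dotProduct_contrYZ, hYZ, dotProduct_smul, hx, smul_eq_mul, mul_one]

theorem mEig6_of_forall_abs_hexForm_le (hA : PairedSym6 A) (hu : u ⬝ᵥ u = 1) (hv : v ⬝ᵥ v = 1)
    (hw : w ⬝ᵥ w = 1) (hmax : ∀ x y z : Fin 3 → ℝ, x ⬝ᵥ x = 1 → y ⬝ᵥ y = 1 → z ⬝ᵥ z = 1 →
      |hexForm A x y z| ≤ |hexForm A u v w|) :
    MEig6 A (hexForm A u v w) u v w := by
  refine mEig6_iff.mpr ⟨hu, hv, hw, ?_, ?_, ?_⟩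
  · rw [hexForm_eq_dotProduct_contrYZ]
    refine (contrYZ_isSymm hA).mulVec_eq_smul_of_abs_le hu fun x hx => ?_
    simpa only [hexForm_eq_dotProduct_contrYZ] using hmax x v w hx hv hw
  · rw [hexForm_eq_dotProduct_contrXZ]
    refine (contrXZ_isSymm hA).mulVec_eq_smul_of_abs_le hv fun y hy => ?_
    simpa only [hexForm_eq_dotProduct_contrXZ] using hmax u y w hu hy hw
  · rw [hexForm_eq_dotProduct_contrXY]
    refine (contrXY_isSymm hA).mulVec_eq_smul_of_abs_le hw fun z hz => ?_
    simpa only [hexForm_eq_dotProduct_contrXY] using hmax u v z hu hv hz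

theorem exists_forall_abs_hexForm_le (A : Tensor6) :
    ∃ u v w : Fin 3 → ℝ, u ⬝ᵥ u = 1 ∧ v ⬝ᵥ v = 1 ∧ w ⬝ᵥ w = 1 ∧
      ∀ x y z : Fin 3 → ℝ, x ⬝ᵥ x = 1 → y ⬝ᵥ y = 1 → z ⬝ᵥ z = 1 →
        |hexForm A x y z| ≤ |hexForm A u v w| := by
  set S := {x : Fin 3 → ℝ | x ⬝ᵥ x = 1}
  have hS : IsCompact S := isCompact_setOf_dotProduct_self_eq_one
  have he : Pi.single 0 1 ∈ S := by simp [S]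
  have hcont : Continuous fun t : (Fin 3 → ℝ) × (Fin 3 → ℝ) × (Fin 3 → ℝ) =>
      |hexForm A t.1 t.2.1 t.2.2| := by
    unfold hexForm; fun_prop
  obtain ⟨⟨u, v, w⟩, ⟨hu, hv, hw⟩, huvw⟩ :=
    (hS.prod (hS.prod hS)).exists_isMaxOn ⟨(_, _, _), he, he, he⟩ hcont.continuousOn
  exact ⟨u, v, w, hu, hv, hw, fun x y z hx hy hz => isMaxOn_iff.mp huvw (x, y, z) ⟨hx, hy, hz⟩⟩

end Eigen

theorem hsNorm6_sub_rankOne6 (A : Tensor6) (lam : ℝ) {x y z : Fin 3 → ℝ} (hx : x ⬝ᵥ x = 1)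
    (hy : y ⬝ᵥ y = 1) (hz : z ⬝ᵥ z = 1) :
    hsNorm6 (A - rankOne6 lam x y z) = √((∑ i, ∑ j, ∑ k, ∑ l, ∑ p, ∑ q, A i j k l p q ^ 2)
      - 2 * lam * hexForm A x y z + lam ^ 2) := by
  have hsq : ∀ i j k l p q : Fin 3, (A - rankOne6 lam x y z) i j k l p q ^ 2 =
      A i j k l p q ^ 2 - 2 * lam * (A i j k l p q * x i * x j * y k * y l * z p * z q)
        + lam ^ 2 * (x i * x i) * (x j * x j) * (y k * y k) * (y l * y l) * (z p * z p)
          * (z q * z q) := by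
    intro i j k l p q
    simp only [Pi.sub_apply, rankOne6]
    ring
  simp only [dotProduct] at hx hy hz
  simp only [hsNorm6, hexForm, hsq, Finset.sum_add_distrib, Finset.sum_sub_distrib,
    ← Finset.mul_sum, hx, hy, hz, mul_one]

theorem stmt_6 (A : Tensor6) (hA : PairedSym6 A)
    (lamStar : ℝ) (xs ys zs : Fin 3 → ℝ)
    (hstar : MEig6 A lamStar xs ys zs)
    (hmax : ∀ (lam : ℝ) (x y z : Fin 3 → ℝ), MEig6 A lam x y z → |lam| ≤ |lamStar|) :
    ∀ (lam : ℝ) (x y z : Fin 3 → ℝ),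
      (∑ i, x i * x i) = 1 → (∑ i, y i * y i) = 1 → (∑ i, z i * z i) = 1 →
      hsNorm6 (A - rankOne6 lamStar xs ys zs) ≤ hsNorm6 (A - rankOne6 lam x y z) := by
  intro lam x y z hx hy hz
  obtain ⟨u, v, w, hu, hv, hw, huvw⟩ := exists_forall_abs_hexForm_le A
  have hbound : |hexForm A x y z| ≤ |lamStar| :=
    (huvw x y z hx hy hz).trans (hmax _ u v w (mEig6_of_forall_abs_hexForm_le hA hu hv hw huvw))
  obtain ⟨hxs, hys, hzs, -⟩ := id hstar
  rw [hsNorm6_sub_rankOne6 A _ hxs hys hzs, hsNorm6_sub_rankOne6 A _ hx hy hz, hstar.hexForm_eq]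
  refine Real.sqrt_le_sqrt ?_
  nlinarith [sq_le_sq.mpr hbound, sq_nonneg (lam - hexForm A x y z)]
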